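/- For disjoint finite nonempty sets M and N, the set of partitions 𝒫(M ∪ N) is in bijection with the disjoint union, over partitions Q of N, of the sets 𝒫(M)[Q] of partitions of M tagged by the blocks of Q. -/
import Mathlib


/-- `P` is a partition of the subset `S`. -/
def IsPartitionOn {α : Type*} (S : Set α) (P : Set (Set α)) : Prop :=
  ∅ ∉ P ∧ (∀ p ∈ P, p ⊆ S) ∧ ∀ x ∈ S, ∃! p, p ∈ P ∧ x ∈ p

/-- The trace of a collection of sets `G` on a set `S`:
`{g ∩ S : g ∈ G} \ {∅}`. -/
def trace {α : Type*} (S : Set α) (G : Set (Set α)) : Set (Set α) :=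
  {s | s.Nonempty ∧ ∃ g ∈ G, s = g ∩ S}

/-- The set of coupled partitions `P ∪̃ Q`: partitions of `M ∪ N` whose trace
on `M` is `P` and whose trace on `N` is `Q`. -/
def coupled {α : Type*} (M N : Set α) (P Q : Set (Set α)) : Set (Set (Set α)) :=
  {G | IsPartitionOn (M ∪ N) G ∧ trace M G = P ∧ trace N G = Q}

section Aux

variable {α : Type*}

theorem IsPartitionOn.eq_of_mem {S : Set α} {G : Set (Set α)} (hG : IsPartitionOn S G)
    {g g' : Set α} (hg : g ∈ G) (hg' : g' ∈ G) {x : α} (hx : x ∈ g) (hx' : x ∈ g') :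
    g = g' := by
  obtain ⟨p, -, hp⟩ := hG.2.2 x (hG.2.1 g hg hx)
  rw [hp g ⟨hg, hx⟩, hp g' ⟨hg', hx'⟩]

theorem trace_isPartitionOn {S T : Set α} (hST : S ⊆ T) {G : Set (Set α)}
    (hG : IsPartitionOn T G) : IsPartitionOn S (trace S G) := by
  refine ⟨fun h => h.1.ne_empty rfl, fun p hp => ?_, fun x hx => ?_⟩
  · obtain ⟨-, g, -, rfl⟩ := hp
    exact Set.inter_subset_right
  · obtain ⟨g, ⟨hgG, hxg⟩, hu⟩ := hG.2.2 x (hST hx)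
    refine ⟨g ∩ S, ⟨⟨⟨x, hxg, hx⟩, g, hgG, rfl⟩, hxg, hx⟩, ?_⟩
    rintro s ⟨⟨-, g', hg', rfl⟩, hxs⟩
    rw [hu g' ⟨hg', hxs.1⟩]

theorem existsUnique_block {S N : Set α} {G : Set (Set α)} (hG : IsPartitionOn S G)
    {q : Set α} (hq : q ∈ trace N G) : ∃! g, g ∈ G ∧ q = g ∩ N := by
  obtain ⟨⟨x, hx⟩, g, hg, rfl⟩ := hq
  refine ⟨g, ⟨hg, rfl⟩, ?_⟩
  rintro g' ⟨hg', he⟩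
  exact hG.eq_of_mem hg' hg (he ▸ hx : x ∈ g' ∩ N).1 hx.1

/-- The unique block of `G` whose trace on `N` is `q`. -/
noncomputable def blockOf {S N : Set α} {G : Set (Set α)} (hG : IsPartitionOn S G)
    {q : Set α} (hq : q ∈ trace N G) : Set α :=
  (existsUnique_block hG hq).choose

theorem blockOf_mem {S N : Set α} {G : Set (Set α)} (hG : IsPartitionOn S G)
    {q : Set α} (hq : q ∈ trace N G) : blockOf hG hq ∈ G :=
  (existsUnique_block hG hq).choose_spec.1.1

theorem blockOf_inter {S N : Set α} {G : Set (Set α)} (hG : IsPartitionOn S G)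
    {q : Set α} (hq : q ∈ trace N G) : q = blockOf hG hq ∩ N :=
  (existsUnique_block hG hq).choose_spec.1.2

theorem blockOf_unique {S N : Set α} {G : Set (Set α)} (hG : IsPartitionOn S G)
    {q : Set α} (hq : q ∈ trace N G) {g : Set α} (hg : g ∈ G) (h : q = g ∩ N) :
    g = blockOf hG hq :=
  (existsUnique_block hG hq).choose_spec.2 g ⟨hg, h⟩

/-- Forward map: decompose a partition of `M ∪ N`. -/
noncomputable def fwd (M N : Set α) :
    {G : Set (Set α) // IsPartitionOn (M ∪ N) G} →
    (Q : {Q : Set (Set α) // IsPartitionOn N Q}) ×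
      {x : (Q.val → Set α) × Set (Set α) //
        (∀ q, x.1 q ⊆ M) ∧
        (∀ q q' : Q.val, q ≠ q' → Disjoint (x.1 q) (x.1 q')) ∧
        IsPartitionOn (M \ ⋃ q, x.1 q) x.2} := fun G =>
  ⟨⟨trace N G.1, trace_isPartitionOn Set.subset_union_right G.2⟩,
    ⟨(fun q => blockOf G.2 q.2 ∩ M, {g ∈ G.1 | g ∩ N = ∅}), by
      obtain ⟨G, hG⟩ := G
      refine ⟨fun q => Set.inter_subset_right, fun q q' hne => ?_, ?_, fun g hg => ?_, ?_⟩
      · have hbne : blockOf hG q.2 ≠ blockOf hG q'.2 := by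
          intro h
          exact hne (Subtype.ext (by rw [blockOf_inter hG q.2, blockOf_inter hG q'.2, h]))
        refine Set.disjoint_left.mpr fun x hx hx' => hbne ?_
        exact hG.eq_of_mem (blockOf_mem hG q.2) (blockOf_mem hG q'.2) hx.1 hx'.1
      · exact fun h => hG.1 h.1
      · intro x hxg
        refine ⟨?_, ?_⟩
        · rcases hG.2.1 g hg.1 hxg with h | h
          · exact h
          · exact absurd (hg.2 ▸ (⟨hxg, h⟩ : x ∈ g ∩ N)) (Set.notMem_empty x)
        · intro hU
          obtain ⟨q, hq⟩ := Set.mem_iUnion.mp hU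
          have he : g = blockOf hG q.2 :=
            hG.eq_of_mem hg.1 (blockOf_mem hG q.2) hxg hq.1
          have h1 : q.val = g ∩ N := by rw [he]; exact blockOf_inter hG q.2
          have := q.2.1
          rw [h1, hg.2] at this
          exact this.ne_empty rfl
      · intro x hx
        obtain ⟨g, ⟨hgG, hxg⟩, hu⟩ := hG.2.2 x (Or.inl hx.1)
        have hgN : g ∩ N = ∅ := by
          by_contra h
          obtain ⟨y, hy⟩ := Set.nonempty_iff_ne_empty.mpr h
          have hq : g ∩ N ∈ trace N G := ⟨⟨y, hy⟩, g, hgG, rfl⟩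
          have hb : g = blockOf hG hq := blockOf_unique hG hq hgG rfl
          exact hx.2 (Set.mem_iUnion.mpr ⟨⟨g ∩ N, hq⟩, hb ▸ hxg, hx.1⟩)
        refine ⟨g, ⟨⟨hgG, hgN⟩, hxg⟩, ?_⟩
        rintro t ⟨⟨htG, -⟩, hxt⟩
        exact hu t ⟨htG, hxt⟩⟩⟩

/-- Backward map: reassemble a partition of `M ∪ N`. -/
noncomputable def bwd (M N : Set α) (hMN : Disjoint M N) :
    ((Q : {Q : Set (Set α) // IsPartitionOn N Q}) ×
      {x : (Q.val → Set α) × Set (Set α) //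
        (∀ q, x.1 q ⊆ M) ∧
        (∀ q q' : Q.val, q ≠ q' → Disjoint (x.1 q) (x.1 q')) ∧
        IsPartitionOn (M \ ⋃ q, x.1 q) x.2}) →
    {G : Set (Set α) // IsPartitionOn (M ∪ N) G} := fun s =>
  ⟨{t | ∃ q : s.1.val, t = ↑q ∪ s.2.val.1 q} ∪ s.2.val.2, by
    obtain ⟨⟨Q, hQ⟩, ⟨⟨p, R⟩, hp1, hp2, hR⟩⟩ := s
    refine ⟨?_, ?_, ?_⟩
    · rintro (⟨q, hq⟩ | hR0)
      · have : q.val = ∅ := Set.subset_eq_empty (hq ▸ Set.subset_union_left) rfl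
        exact hQ.1 (this ▸ q.2)
      · exact hR.1 hR0
    · rintro t (⟨q, rfl⟩ | ht)
      · exact Set.union_subset ((hQ.2.1 q q.2).trans Set.subset_union_right)
          ((hp1 q).trans Set.subset_union_left)
      · exact (hR.2.1 t ht).trans (Set.diff_subset.trans Set.subset_union_left)
    · rintro x (hxM | hxN)
      · by_cases hxU : x ∈ ⋃ q, p q
        · obtain ⟨q₀, hxq₀⟩ := Set.mem_iUnion.mp hxU
          refine ⟨↑q₀ ∪ p q₀, ⟨Or.inl ⟨q₀, rfl⟩, Or.inr hxq₀⟩, ?_⟩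
          rintro t ⟨(⟨q', rfl⟩ | htR), hxt⟩
          · have hxp : x ∈ p q' := by
              rcases hxt with h | h
              · exact absurd hxM (Set.disjoint_right.mp hMN (hQ.2.1 _ q'.2 h))
              · exact h
            have : q' = q₀ := by
              by_contra hne
              exact Set.disjoint_left.mp (hp2 q' q₀ hne) hxp hxq₀
            rw [this]
          · exact absurd hxU (hR.2.1 t htR hxt).2
        · obtain ⟨r, ⟨hrR, hxr⟩, hr⟩ := hR.2.2 x ⟨hxM, hxU⟩
          refine ⟨r, ⟨Or.inr hrR, hxr⟩, ?_⟩
          rintro t ⟨(⟨q', rfl⟩ | htR), hxt⟩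
          · rcases hxt with h | h
            · exact absurd hxM (Set.disjoint_right.mp hMN (hQ.2.1 _ q'.2 h))
            · exact absurd (Set.mem_iUnion.mpr ⟨q', h⟩) hxU
          · exact hr t ⟨htR, hxt⟩
      · obtain ⟨q, ⟨hqQ, hxq⟩, hq⟩ := hQ.2.2 x hxN
        refine ⟨↑(⟨q, hqQ⟩ : Q) ∪ p ⟨q, hqQ⟩, ⟨Or.inl ⟨⟨q, hqQ⟩, rfl⟩, Or.inl hxq⟩, ?_⟩
        rintro t ⟨(⟨q', rfl⟩ | htR), hxt⟩
        · have hxq' : x ∈ q'.val := by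
            rcases hxt with h | h
            · exact h
            · exact absurd hxN (Set.disjoint_left.mp hMN (hp1 q' h))
          have hqe : q' = (⟨q, hqQ⟩ : Q) := Subtype.ext (hq q'.val ⟨q'.2, hxq'⟩)
          rw [hqe]
        · exact absurd hxN (Set.disjoint_left.mp hMN (hR.2.1 t htR hxt).1)⟩

theorem sigma_helper {M N : Set α}
    {Q Q' : {Q : Set (Set α) // IsPartitionOn N Q}} (h : Q' = Q)
    {x' : {x : (Q'.val → Set α) × Set (Set α) //
      (∀ q, x.1 q ⊆ M) ∧
      (∀ q q' : Q'.val, q ≠ q' → Disjoint (x.1 q) (x.1 q')) ∧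
      IsPartitionOn (M \ ⋃ q, x.1 q) x.2}}
    {x : {x : (Q.val → Set α) × Set (Set α) //
      (∀ q, x.1 q ⊆ M) ∧
      (∀ q q' : Q.val, q ≠ q' → Disjoint (x.1 q) (x.1 q')) ∧
      IsPartitionOn (M \ ⋃ q, x.1 q) x.2}}
    (h1 : ∀ (q : Set α) (hq' : q ∈ Q'.val) (hq : q ∈ Q.val),
      x'.val.1 ⟨q, hq'⟩ = x.val.1 ⟨q, hq⟩)
    (h2 : x'.val.2 = x.val.2) :
    (⟨Q', x'⟩ : (Q : {Q : Set (Set α) // IsPartitionOn N Q}) ×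
      {x : (Q.val → Set α) × Set (Set α) //
        (∀ q, x.1 q ⊆ M) ∧
        (∀ q q' : Q.val, q ≠ q' → Disjoint (x.1 q) (x.1 q')) ∧
        IsPartitionOn (M \ ⋃ q, x.1 q) x.2}) = ⟨Q, x⟩ := by
  subst h
  exact congrArg (Sigma.mk Q') (Subtype.ext (Prod.ext (funext fun q => h1 q.1 q.2 q.2) h2))

end Aux

/-- `𝒫(M ∪ N)` is in bijection with the disjoint union, over partitions `Q`
of `N`, of the sets `𝒫(M)[Q]` of partitions of `M` tagged by the blocks of
`Q` (families `(p_q)_{q∈Q}` of pairwise disjoint, possibly empty, subsets of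
`M` together with a partition of the rest of `M`). -/
theorem stmt11 {α : Type*} (M N : Set α)
    (hMN : Disjoint M N) (hM : M.Finite) (hN : N.Finite)
    (hMne : M.Nonempty) (hNne : N.Nonempty) :
    Nonempty (
      {G : Set (Set α) // IsPartitionOn (M ∪ N) G} ≃
      (Q : {Q : Set (Set α) // IsPartitionOn N Q}) ×
        {x : (Q.val → Set α) × Set (Set α) //
          (∀ q, x.1 q ⊆ M) ∧
          (∀ q q' : Q.val, q ≠ q' → Disjoint (x.1 q) (x.1 q')) ∧
          IsPartitionOn (M \ ⋃ q, x.1 q) x.2}) := by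
  refine ⟨⟨fwd M N, bwd M N hMN, ?_, ?_⟩⟩
  · -- left inverse
    rintro ⟨G, hG⟩
    apply Subtype.ext
    show {t | ∃ q : (trace N G : Set (Set α)),
        t = ↑q ∪ (blockOf hG q.2 ∩ M)} ∪ {g ∈ G | g ∩ N = ∅} = G
    ext t
    constructor
    · rintro (⟨q, rfl⟩ | ht)
      · have h1 : q.val = blockOf hG q.2 ∩ N := blockOf_inter hG q.2
        have h2 : blockOf hG q.2 ∈ G := blockOf_mem hG q.2
        have h3 : blockOf hG q.2 ⊆ N ∪ M := (hG.2.1 _ h2).trans (Set.union_comm M N).subset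
        have : (q : Set α) ∪ (blockOf hG q.2 ∩ M) = blockOf hG q.2 := by
          generalize hb : blockOf hG q.2 = b at h1 h3
          rw [h1, ← Set.inter_union_distrib_left, Set.inter_eq_left.mpr h3]
        rw [this]; exact h2
      · exact ht.1
    · intro htG
      rcases Set.eq_empty_or_nonempty (t ∩ N) with h | h
      · exact Or.inr ⟨htG, h⟩
      · have hq : t ∩ N ∈ trace N G := ⟨h, t, htG, rfl⟩
        refine Or.inl ⟨⟨t ∩ N, hq⟩, ?_⟩
        have hb : t = blockOf hG hq := blockOf_unique hG hq htG rfl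
        have ht2 : t ⊆ N ∪ M := (hG.2.1 t htG).trans (Set.union_comm M N).subset
        show t = (t ∩ N) ∪ (blockOf hG hq ∩ M)
        rw [← hb, ← Set.inter_union_distrib_left, Set.inter_eq_left.mpr ht2]
  · -- right inverse
    rintro ⟨⟨Q, hQ⟩, ⟨⟨p, R⟩, hp1, hp2, hR⟩⟩
    set G' : Set (Set α) := {t | ∃ q : Q, t = ↑q ∪ p q} ∪ R with hG'def
    have hG' : IsPartitionOn (M ∪ N) G' :=
      (bwd M N hMN ⟨⟨Q, hQ⟩, ⟨⟨p, R⟩, hp1, hp2, hR⟩⟩).2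
    have hpN : ∀ q : Q, p q ∩ N = ∅ :=
      fun q => Set.disjoint_iff_inter_eq_empty.mp (hMN.mono_left (hp1 q))
    have hcap : ∀ q : Q, ((q : Set α) ∪ p q) ∩ N = q := by
      intro q
      rw [Set.union_inter_distrib_right, Set.inter_eq_left.mpr (hQ.2.1 _ q.2), hpN q,
        Set.union_empty]
    have hRM : ∀ r ∈ R, r ∩ N = ∅ := by
      intro r hr
      exact Set.disjoint_iff_inter_eq_empty.mp
        (hMN.mono_left ((hR.2.1 r hr).trans Set.diff_subset))
    have hT : trace N G' = Q := by
      ext s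
      constructor
      · rintro ⟨hs, g, (⟨q, rfl⟩ | hgR), rfl⟩
        · rw [hcap q]; exact q.2
        · rw [hRM g hgR] at hs
          exact absurd hs Set.not_nonempty_empty
      · intro hsQ
        have hne : s.Nonempty :=
          Set.nonempty_iff_ne_empty.mpr (fun h => hQ.1 (h ▸ hsQ))
        exact ⟨hne, ↑(⟨s, hsQ⟩ : Q) ∪ p ⟨s, hsQ⟩, Or.inl ⟨⟨s, hsQ⟩, rfl⟩,
          (hcap ⟨s, hsQ⟩).symm⟩
    refine sigma_helper (Subtype.ext hT) (fun q hq' hq => ?_) ?_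
    · show blockOf hG' hq' ∩ M = p ⟨q, hq⟩
      have hg : (q ∪ p ⟨q, hq⟩) ∈ G' := Or.inl ⟨⟨q, hq⟩, rfl⟩
      have hb : (q ∪ p ⟨q, hq⟩) = blockOf hG' hq' :=
        blockOf_unique hG' hq' hg (hcap ⟨q, hq⟩).symm
      have hqM : q ∩ M = ∅ :=
        Set.disjoint_iff_inter_eq_empty.mp (hMN.symm.mono_left (hQ.2.1 q hq))
      rw [← hb, Set.union_inter_distrib_right, hqM,
        Set.inter_eq_left.mpr (hp1 ⟨q, hq⟩), Set.empty_union]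
    · show {g ∈ G' | g ∩ N = ∅} = R
      ext g
      constructor
      · rintro ⟨(⟨q, rfl⟩ | hgR), hN0⟩
        · rw [hcap q] at hN0
          exact absurd (hN0 ▸ q.2) hQ.1
        · exact hgR
      · intro hgR
        exact ⟨Or.inr hgR, hRM g hgR⟩
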